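/- arXiv:1908.08101 — 2 statements merged into one kernel-verified Lean document; each statement's English description precedes it below -/
import Mathlib

section
/- Unthresholded CUR perturbation bound (Corollary 4.4): Writing w = ‖W_{k,I}†‖_F and v = ‖V_{k,J}†‖_F, one has ‖A − C̃ Ũ† R̃‖_F ≤ (w + v + 3·w·v)·‖E‖_F + ‖Ũ†‖_F · (w + v + w·v + 1) · ‖E‖_F². -/
open Matrix

noncomputable section

variable {𝕂 : Type} [RCLike 𝕂]

/-- The Frobenius norm of a matrix. -/
noncomputable def frobNorm {m n : ℕ} (M : Matrix (Fin m) (Fin n) 𝕂) : ℝ :=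
  Real.sqrt (∑ i, ∑ j, ‖M i j‖ ^ 2)

/-- The `i`-th largest singular value of a matrix (1-indexed), i.e. the `i`-th largest
square root of an eigenvalue of `Mᴴ * M`. -/
noncomputable def sigma {m n : ℕ} (M : Matrix (Fin m) (Fin n) 𝕂) (i : ℕ) : ℝ :=
  ((List.ofFn fun j : Fin n =>
      Real.sqrt ((Matrix.isHermitian_conjTranspose_mul_self M).eigenvalues j)).insertionSort
      (· ≥ ·)).getD (i - 1) 0

/-- The spectral norm: the largest singular value. -/
noncomputable def specNorm {m n : ℕ} (M : Matrix (Fin m) (Fin n) 𝕂) : ℝ := sigma M 1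

/-- `P` is the Moore–Penrose pseudoinverse of `M`: the four Penrose conditions. -/
def IsMPInv {m n : ℕ} (M : Matrix (Fin m) (Fin n) 𝕂) (P : Matrix (Fin n) (Fin m) 𝕂) : Prop :=
  M * P * M = M ∧ P * M * P = P ∧ (M * P)ᴴ = M * P ∧ (P * M)ᴴ = P * M

/-- `Mr` is a truncated SVD of order `r` of `M`, i.e. a best rank-`r` approximation of `M`
(equivalently, a matrix obtained from an SVD of `M` by keeping the `r` largest singular
values and zeroing out the rest). -/
def IsTruncSVD {m n : ℕ} (M Mr : Matrix (Fin m) (Fin n) 𝕂) (r : ℕ) : Prop :=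
  Mr.rank ≤ r ∧ ∀ B : Matrix (Fin m) (Fin n) 𝕂, B.rank ≤ r → frobNorm (M - Mr) ≤ frobNorm (M - B)

/-- `Mt = [M]_τ`: the matrix obtained from an SVD of `M` by setting to zero every singular
value strictly less than `τ` (i.e. keeping exactly the singular values `≥ τ`). -/
def IsThresh {m n : ℕ} (M Mt : Matrix (Fin m) (Fin n) 𝕂) (τ : ℝ) : Prop :=
  IsTruncSVD M Mt (Nat.card {i : Fin (min m n) // τ ≤ sigma M ((i : ℕ) + 1)})

/-- The volume of a matrix: the product of its `min p q` largest singular values. -/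
noncomputable def vol {p q : ℕ} (M : Matrix (Fin p) (Fin q) 𝕂) : ℝ :=
  ∏ i ∈ Finset.range (min p q), sigma M (i + 1)

end

/-!
Since `U = W_{k,I} Σ_k V_{k,J}*` has rank `k`, both `W_{k,I}` and `V_{k,J}` have full column rank,
so `W_{k,I}† W_{k,I} = 1 = V_{k,J}† V_{k,J}`. With `Y = W_k W_{k,I}†` and `X = (V_{k,J}†)* V_k*`
this gives `C = Y U`, `R = U X` and `A = Y U X`, hence
`A - C̃ Ũ† R̃ = Y (U - U Ũ† U) X - Y U Ũ† E_I - E_J Ũ† U X - E_J Ũ† E_I`.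
Substituting `U = Ũ - E_{I,J}` inside each term leaves perturbations multiplied either by one of
the orthogonal projections `Ũ Ũ†`, `Ũ† Ũ`, which are Frobenius contractions, or by `Ũ†` and a
second perturbation. Finally `‖Y M‖ ≤ w ‖M‖` and `‖M X‖ ≤ ‖M‖ v` since `W_k` and `V_k` have
orthonormal columns.
-/

attribute [local instance] Matrix.frobeniusNormedAddCommGroup

theorem Fintype.sum_comp_le_sum_of_injective {ι κ M : Type*} [Fintype ι] [Fintype κ]
    [AddCommMonoid M] [PartialOrder M] [IsOrderedAddMonoid M] {e : ι → κ}
    (he : Function.Injective e) (F : κ → M) (hF : ∀ x, 0 ≤ F x) : ∑ i, F (e i) ≤ ∑ x, F x :=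
  (Finset.sum_map Finset.univ ⟨e, he⟩ F).symm.trans_le <|
    Finset.sum_le_sum_of_subset_of_nonneg (Finset.subset_univ _) fun x _ _ => hF x

namespace Matrix

variable {l m n : Type*}

section FrobeniusNorm

variable {𝕂 : Type*} [RCLike 𝕂] [Fintype l] [Fintype m] [Fintype n]

theorem frobenius_norm_sq_eq_sum (A : Matrix m n 𝕂) : ‖A‖ ^ 2 = ∑ i, ∑ j, ‖A i j‖ ^ 2 := by
  rw [frobenius_norm_def, ← Real.rpow_natCast, ← Real.rpow_mul (by positivity)]
  norm_num

theorem frobenius_norm_sq_eq_re_trace (A : Matrix m n 𝕂) :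
    ‖A‖ ^ 2 = RCLike.re (Aᴴ * A).trace := by
  rw [frobenius_norm_sq_eq_sum, trace, Finset.sum_comm]
  simp [mul_apply, RCLike.conj_mul]

theorem frobenius_norm_mul_of_conjTranspose_mul_self_eq_one [DecidableEq m] {W : Matrix l m 𝕂}
    (hW : Wᴴ * W = 1) (A : Matrix m n 𝕂) : ‖W * A‖ = ‖A‖ := by
  rw [← sq_eq_sq₀ (norm_nonneg _) (norm_nonneg _), frobenius_norm_sq_eq_re_trace,
    frobenius_norm_sq_eq_re_trace, conjTranspose_mul, Matrix.mul_assoc, ← Matrix.mul_assoc Wᴴ,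
    hW, Matrix.one_mul]

theorem frobenius_norm_mul_conjTranspose_of_conjTranspose_mul_self_eq_one [DecidableEq m]
    {V : Matrix l m 𝕂} (hV : Vᴴ * V = 1) (A : Matrix n m 𝕂) : ‖A * Vᴴ‖ = ‖A‖ := by
  rw [← frobenius_norm_conjTranspose, conjTranspose_mul, conjTranspose_conjTranspose,
    frobenius_norm_mul_of_conjTranspose_mul_self_eq_one hV, frobenius_norm_conjTranspose]

theorem frobenius_norm_isStarProjection_mul_le [DecidableEq m] {Q : Matrix m m 𝕂}
    (hQ : IsStarProjection Q) (A : Matrix m n 𝕂) : ‖Q * A‖ ≤ ‖A‖ := by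
  have hQ' : IsStarProjection (1 - Q) := hQ.one_sub
  have gram : ∀ {R : Matrix m m 𝕂}, IsStarProjection R → (R * A)ᴴ * (R * A) = Aᴴ * (R * A) := by
    intro R hR
    rw [conjTranspose_mul, ← star_eq_conjTranspose, hR.isSelfAdjoint.star_eq, Matrix.mul_assoc,
      ← Matrix.mul_assoc R, hR.isIdempotentElem.eq]
  have pythagoras : ‖Q * A‖ ^ 2 + ‖(1 - Q) * A‖ ^ 2 = ‖A‖ ^ 2 := by
    rw [frobenius_norm_sq_eq_re_trace, frobenius_norm_sq_eq_re_trace, gram hQ, gram hQ',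
      ← map_add, ← trace_add, ← Matrix.mul_add, ← Matrix.add_mul, add_sub_cancel, Matrix.one_mul,
      frobenius_norm_sq_eq_re_trace]
  nlinarith [sq_nonneg ‖(1 - Q) * A‖, norm_nonneg (Q * A), norm_nonneg A]

theorem frobenius_norm_mul_isStarProjection_le [DecidableEq n] {Q : Matrix n n 𝕂}
    (hQ : IsStarProjection Q) (A : Matrix m n 𝕂) : ‖A * Q‖ ≤ ‖A‖ := by
  have hQH : Qᴴ = Q := hQ.isSelfAdjoint.star_eq
  rw [← frobenius_norm_conjTranspose, conjTranspose_mul, hQH, ← frobenius_norm_conjTranspose A]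
  exact frobenius_norm_isStarProjection_mul_le hQ Aᴴ

theorem frobenius_norm_submatrix_le {l' : Type*} [Fintype l'] (A : Matrix m n 𝕂) {f : l → m}
    {g : l' → n} (hf : Function.Injective f) (hg : Function.Injective g) :
    ‖A.submatrix f g‖ ≤ ‖A‖ := by
  rw [← sq_le_sq₀ (norm_nonneg _) (norm_nonneg _), frobenius_norm_sq_eq_sum,
    frobenius_norm_sq_eq_sum]
  calc ∑ i, ∑ j, ‖A (f i) (g j)‖ ^ 2 ≤ ∑ i, ∑ j, ‖A (f i) j‖ ^ 2 :=
        Finset.sum_le_sum fun i _ =>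
          Fintype.sum_comp_le_sum_of_injective hg (fun j => ‖A (f i) j‖ ^ 2) fun _ => by positivity
    _ ≤ ∑ i, ∑ j, ‖A i j‖ ^ 2 :=
        Fintype.sum_comp_le_sum_of_injective hf (fun i => ∑ j, ‖A i j‖ ^ 2) fun _ => by positivity

theorem frobenius_norm_mul_mul_le_of_conjTranspose_mul_self_eq_one [DecidableEq m]
    {W : Matrix l m 𝕂} (hW : Wᴴ * W = 1) {k : Type*} [Fintype k] (B : Matrix m k 𝕂)
    (C : Matrix k n 𝕂) : ‖W * B * C‖ ≤ ‖B‖ * ‖C‖ := by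
  rw [Matrix.mul_assoc, frobenius_norm_mul_of_conjTranspose_mul_self_eq_one hW]
  exact frobenius_norm_mul B C

theorem frobenius_norm_mul_conjTranspose_mul_conjTranspose_le_of_conjTranspose_mul_self_eq_one
    [DecidableEq m] {V : Matrix l m 𝕂} (hV : Vᴴ * V = 1) {k : Type*} [Fintype k]
    (B : Matrix k n 𝕂) (C : Matrix m n 𝕂) : ‖B * (Cᴴ * Vᴴ)‖ ≤ ‖B‖ * ‖C‖ := by
  rw [← Matrix.mul_assoc, frobenius_norm_mul_conjTranspose_of_conjTranspose_mul_self_eq_one hV,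
    ← frobenius_norm_conjTranspose C]
  exact frobenius_norm_mul B Cᴴ

end FrobeniusNorm

theorem mul_left_cancel_of_rank_eq_card_width {K : Type*} [Field K] [Fintype n]
    {M : Matrix m n K} (hM : M.rank = Fintype.card n) {X Y : Matrix n l K} (h : M * X = M * Y) :
    X = Y := by
  have hker : LinearMap.ker M.mulVecLin = ⊥ := by
    have hrn := M.mulVecLin.finrank_range_add_finrank_ker
    change M.rank + _ = _ at hrn
    rw [hM, Module.finrank_fintype_fun_eq_card, add_eq_left] at hrn
    exact Submodule.finrank_eq_zero.mp hrn
  ext i j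
  refine congr_fun (LinearMap.ker_eq_bot.mp hker (?_ : M.mulVecLin (fun r => X r j) =
    M.mulVecLin (fun r => Y r j))) i
  funext i'
  simpa [mulVec, dotProduct, mul_apply] using congr_fun (congr_fun h i') j

section Factorization

variable {R : Type*} [Ring R] [StarRing R] {p q r s : Type*} [Fintype r] [Fintype s]

theorem submatrix_mul_mul_conjTranspose (W : Matrix m r R) (D : Matrix r s R) (V : Matrix n s R)
    (f : p → m) (g : q → n) :
    (W * D * Vᴴ).submatrix f g = W.submatrix f id * D * (V.submatrix g id)ᴴ := by
  rw [submatrix_mul _ _ _ id _ Function.bijective_id,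
    submatrix_mul _ _ _ id _ Function.bijective_id, conjTranspose_submatrix, submatrix_id_id]

variable {A : Matrix m n R} {W : Matrix m r R} {D : Matrix r s R} {V : Matrix n s R}

theorem submatrix_cols_eq_mul_submatrix [Fintype p] [DecidableEq r] (hA : A = W * D * Vᴴ)
    {f : p → m} {Wp : Matrix r p R} (hWf : Wp * W.submatrix f id = 1) (g : q → n) :
    A.submatrix id g = W * Wp * A.submatrix f g := by
  rw [hA, submatrix_mul_mul_conjTranspose, submatrix_mul_mul_conjTranspose, submatrix_id_id]
  simp only [Matrix.mul_assoc]
  rw [← Matrix.mul_assoc Wp, hWf, Matrix.one_mul]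

theorem submatrix_rows_eq_submatrix_mul [Fintype q] [DecidableEq s] (hA : A = W * D * Vᴴ)
    {g : q → n} {Vp : Matrix s q R} (hVg : Vp * V.submatrix g id = 1) (f : p → m) :
    A.submatrix f id = A.submatrix f g * (Vpᴴ * Vᴴ) := by
  rw [hA, submatrix_mul_mul_conjTranspose, submatrix_mul_mul_conjTranspose, submatrix_id_id,
    Matrix.mul_assoc _ _ (Vpᴴ * Vᴴ), ← Matrix.mul_assoc _ Vpᴴ, ← conjTranspose_mul, hVg,
    conjTranspose_one, Matrix.one_mul]

end Factorization

theorem cur_error_eq {R : Type*} [Ring R] {p q : Type*} [Fintype p] [Fintype q]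
    (Y : Matrix m p R) (U : Matrix p q R) (X : Matrix q n R) (P : Matrix q p R)
    (Ec : Matrix m q R) (Eb : Matrix p n R) :
    Y * U * X - (Y * U + Ec) * P * (U * X + Eb) =
      Y * ((U - U * P * U) * X) - Y * (U * P * Eb) - Ec * P * U * X - Ec * P * Eb := by
  simp only [Matrix.mul_add, Matrix.add_mul, Matrix.mul_sub, Matrix.sub_mul, Matrix.mul_assoc]
  abel

end Matrix

namespace IsMPInv

variable {𝕂 : Type} [RCLike 𝕂] {p q : ℕ} {M U E : Matrix (Fin p) (Fin q) 𝕂}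
  {P : Matrix (Fin q) (Fin p) 𝕂}

theorem isStarProjection_mul_pinv (h : IsMPInv M P) : IsStarProjection (M * P) :=
  ⟨by rw [IsIdempotentElem, ← Matrix.mul_assoc, h.1], h.2.2.1⟩

theorem isStarProjection_pinv_mul (h : IsMPInv M P) : IsStarProjection (P * M) :=
  ⟨by rw [IsIdempotentElem, ← Matrix.mul_assoc, h.2.1], h.2.2.2⟩

theorem pinv_mul_eq_one (h : IsMPInv M P) (hM : M.rank = q) : P * M = 1 :=
  Matrix.mul_left_cancel_of_rank_eq_card_width (by rw [hM, Fintype.card_fin])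
    (by rw [← Matrix.mul_assoc, h.1, Matrix.mul_one])

theorem pinv_mul_eq_one_of_rank_mul {r : Type*} [Fintype r] {B : Matrix (Fin q) r 𝕂}
    (h : IsMPInv M P) (hMB : (M * B).rank = q) : P * M = 1 :=
  h.pinv_mul_eq_one (le_antisymm M.rank_le_width (hMB.symm.le.trans (M.rank_mul_le_left B)))

open scoped ComplexOrder in
theorem pinv_mul_eq_one_of_rank_mul_conjTranspose {r : Type*} {B : Matrix r (Fin q) 𝕂}
    (h : IsMPInv M P) (hBM : (B * Mᴴ).rank = q) : P * M = 1 :=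
  h.pinv_mul_eq_one (le_antisymm M.rank_le_width
    (hBM.symm.le.trans ((B.rank_mul_le_right Mᴴ).trans_eq M.rank_conjTranspose)))

theorem norm_mul_pinv_mul_le {l : Type*} [Fintype l] (h : IsMPInv (U + E) P)
    (B : Matrix (Fin p) l 𝕂) : ‖U * P * B‖ ≤ (1 + ‖E‖ * ‖P‖) * ‖B‖ := by
  have split : U * P * B = (U + E) * P * B - E * P * B := by
    rw [Matrix.add_mul, Matrix.add_mul, add_sub_cancel_right]
  calc ‖U * P * B‖ ≤ ‖(U + E) * P * B‖ + ‖E * P * B‖ := split ▸ norm_sub_le _ _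
    _ ≤ ‖B‖ + ‖E‖ * ‖P‖ * ‖B‖ := by
      gcongr
      · exact Matrix.frobenius_norm_isStarProjection_mul_le h.isStarProjection_mul_pinv B
      · exact (Matrix.frobenius_norm_mul _ _).trans
          (by gcongr; exact Matrix.frobenius_norm_mul _ _)
    _ = (1 + ‖E‖ * ‖P‖) * ‖B‖ := by ring

theorem norm_mul_pinv_mul_le' {l : Type*} [Fintype l] (h : IsMPInv (U + E) P)
    (B : Matrix l (Fin q) 𝕂) : ‖B * P * U‖ ≤ ‖B‖ * (1 + ‖P‖ * ‖E‖) := by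
  have split : B * P * U = B * (P * (U + E)) - B * P * E := by
    rw [Matrix.mul_add, Matrix.mul_add, Matrix.mul_assoc, Matrix.mul_assoc, add_sub_cancel_right]
  calc ‖B * P * U‖ ≤ ‖B * (P * (U + E))‖ + ‖B * P * E‖ := split ▸ norm_sub_le _ _
    _ ≤ ‖B‖ + ‖B‖ * ‖P‖ * ‖E‖ := by
      gcongr
      · exact Matrix.frobenius_norm_mul_isStarProjection_le h.isStarProjection_pinv_mul B
      · exact (Matrix.frobenius_norm_mul _ _).trans
          (by gcongr; exact Matrix.frobenius_norm_mul _ _)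
    _ = ‖B‖ * (1 + ‖P‖ * ‖E‖) := by ring

theorem norm_sub_mul_pinv_mul_le (h : IsMPInv (U + E) P) :
    ‖U - U * P * U‖ ≤ 3 * ‖E‖ + ‖P‖ * ‖E‖ ^ 2 := by
  have expand : U - U * P * U = (U + E) * P * E + E * (P * (U + E)) - E - E * P * E := by
    have h1 := h.1
    simp only [Matrix.add_mul, Matrix.mul_add] at h1 ⊢
    rw [← sub_eq_zero, ← sub_eq_zero.mpr h1.symm]
    simp only [Matrix.mul_assoc]
    abel
  have hPE : ‖(U + E) * P * E‖ ≤ ‖E‖ :=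
    Matrix.frobenius_norm_isStarProjection_mul_le h.isStarProjection_mul_pinv E
  have hEP : ‖E * (P * (U + E))‖ ≤ ‖E‖ :=
    Matrix.frobenius_norm_mul_isStarProjection_le h.isStarProjection_pinv_mul E
  have hEPE : ‖E * P * E‖ ≤ ‖E‖ * ‖P‖ * ‖E‖ :=
    (Matrix.frobenius_norm_mul _ _).trans (by gcongr; exact Matrix.frobenius_norm_mul _ _)
  calc ‖U - U * P * U‖ ≤ ‖E‖ + ‖E‖ + ‖E‖ + ‖E‖ * ‖P‖ * ‖E‖ :=
        expand ▸ norm_sub_le_of_le (norm_sub_le_of_le (norm_add_le_of_le hPE hEP) le_rfl) hEPE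
    _ = 3 * ‖E‖ + ‖P‖ * ‖E‖ ^ 2 := by ring

end IsMPInv

namespace Matrix

variable {𝕂 : Type} [RCLike 𝕂] {m n r s : Type*} [Fintype m] [Fintype n] [Fintype r]
  [Fintype s] [DecidableEq r] [DecidableEq s] {p q : ℕ}

theorem frobenius_norm_cur_error_le {W : Matrix m r 𝕂} {V : Matrix n s 𝕂} (hW : Wᴴ * W = 1)
    (hV : Vᴴ * V = 1) (Wp : Matrix r (Fin p) 𝕂) (Vp : Matrix s (Fin q) 𝕂)
    {U Ea : Matrix (Fin p) (Fin q) 𝕂} {P : Matrix (Fin q) (Fin p) 𝕂} (hP : IsMPInv (U + Ea) P)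
    {Eb : Matrix (Fin p) n 𝕂} {Ec : Matrix m (Fin q) 𝕂} {e : ℝ} (hEa : ‖Ea‖ ≤ e)
    (hEb : ‖Eb‖ ≤ e) (hEc : ‖Ec‖ ≤ e) :
    ‖W * Wp * U * (Vpᴴ * Vᴴ) - (W * Wp * U + Ec) * P * (U * (Vpᴴ * Vᴴ) + Eb)‖ ≤
      (‖Wp‖ + ‖Vp‖ + 3 * (‖Wp‖ * ‖Vp‖)) * e +
        ‖P‖ * (‖Wp‖ + ‖Vp‖ + ‖Wp‖ * ‖Vp‖ + 1) * e ^ 2 := by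
  have he : 0 ≤ e := (norm_nonneg _).trans hEa
  have hY : ∀ B : Matrix (Fin p) n 𝕂, ‖W * Wp * B‖ ≤ ‖Wp‖ * ‖B‖ :=
    frobenius_norm_mul_mul_le_of_conjTranspose_mul_self_eq_one hW Wp
  have h1 :
      ‖W * Wp * ((U - U * P * U) * (Vpᴴ * Vᴴ))‖ ≤ ‖Wp‖ * ((3 * e + ‖P‖ * e ^ 2) * ‖Vp‖) := by
    refine (hY _).trans ?_
    gcongr
    refine
      (frobenius_norm_mul_conjTranspose_mul_conjTranspose_le_of_conjTranspose_mul_self_eq_one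
        hV _ Vp).trans ?_
    gcongr
    exact hP.norm_sub_mul_pinv_mul_le.trans (by gcongr)
  have h2 : ‖W * Wp * (U * P * Eb)‖ ≤ ‖Wp‖ * ((1 + e * ‖P‖) * e) :=
    (hY _).trans (by gcongr; exact (hP.norm_mul_pinv_mul_le Eb).trans (by gcongr))
  have h3 : ‖Ec * P * U * (Vpᴴ * Vᴴ)‖ ≤ e * (1 + ‖P‖ * e) * ‖Vp‖ :=
    (frobenius_norm_mul_conjTranspose_mul_conjTranspose_le_of_conjTranspose_mul_self_eq_one
      hV _ Vp).trans (by gcongr; exact (hP.norm_mul_pinv_mul_le' Ec).trans (by gcongr))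
  have h4 : ‖Ec * P * Eb‖ ≤ e * ‖P‖ * e :=
    (frobenius_norm_mul _ _).trans (by gcongr; exact (frobenius_norm_mul _ _).trans (by gcongr))
  rw [cur_error_eq]
  calc _ ≤ _ := norm_sub_le_of_le (norm_sub_le_of_le (norm_sub_le_of_le h1 h2) h3) h4
    _ = _ := by ring

end Matrix

theorem frobNorm_eq_norm {𝕂 : Type} [RCLike 𝕂] {p q : ℕ} (M : Matrix (Fin p) (Fin q) 𝕂) :
    frobNorm M = ‖M‖ := by
  rw [frobNorm, ← Matrix.frobenius_norm_sq_eq_sum, Real.sqrt_sq (norm_nonneg _)]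

theorem cur_perturbation_general {𝕂 : Type} [RCLike 𝕂] {m n k p q : ℕ}
    (A E : Matrix (Fin m) (Fin n) 𝕂)
    (ι : Fin p ↪ Fin m) (κ : Fin q ↪ Fin n)
    (hrankU : (A.submatrix ⇑ι ⇑κ).rank = k)
    (W : Matrix (Fin m) (Fin k) 𝕂) (V : Matrix (Fin n) (Fin k) 𝕂) (d : Fin k → ℝ)
    (hW : Wᴴ * W = 1) (hV : Vᴴ * V = 1)
    (hSVD : A = W * Matrix.diagonal (fun i => (d i : 𝕂)) * Vᴴ)
    (Wp : Matrix (Fin k) (Fin p) 𝕂) (hWp : IsMPInv (W.submatrix ⇑ι id) Wp)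
    (Vp : Matrix (Fin k) (Fin q) 𝕂) (hVp : IsMPInv (V.submatrix ⇑κ id) Vp)
    (Utp : Matrix (Fin q) (Fin p) 𝕂) (hUtp : IsMPInv ((A + E).submatrix ⇑ι ⇑κ) Utp) :
    frobNorm (A - (A + E).submatrix id ⇑κ * Utp * (A + E).submatrix ⇑ι id) ≤
      (frobNorm Wp + frobNorm Vp + 3 * (frobNorm Wp * frobNorm Vp)) * frobNorm E +
        frobNorm Utp * (frobNorm Wp + frobNorm Vp + frobNorm Wp * frobNorm Vp + 1) *
          frobNorm E ^ 2 := by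
  set D := Matrix.diagonal fun i => (d i : 𝕂)
  have hU : A.submatrix ι κ = W.submatrix ι id * D * (V.submatrix κ id)ᴴ :=
    hSVD ▸ submatrix_mul_mul_conjTranspose W D V ι κ
  have hWi : Wp * W.submatrix ι id = 1 :=
    hWp.pinv_mul_eq_one_of_rank_mul (B := D * (V.submatrix κ id)ᴴ)
      (by rw [← Matrix.mul_assoc, ← hU, hrankU])
  have hVj : Vp * V.submatrix κ id = 1 :=
    hVp.pinv_mul_eq_one_of_rank_mul_conjTranspose (B := W.submatrix ι id * D)
      (by rw [← hU, hrankU])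
  have hC := submatrix_cols_eq_mul_submatrix hSVD hWi κ
  have hR := submatrix_rows_eq_submatrix_mul hSVD hVj ι
  have hA : A = W * Wp * A.submatrix ι κ * (Vpᴴ * Vᴴ) := by
    rw [← hC, ← submatrix_rows_eq_submatrix_mul hSVD hVj id, submatrix_id_id]
  have key := frobenius_norm_cur_error_le hW hV Wp Vp
    (U := A.submatrix ι κ) (Ea := E.submatrix ι κ) hUtp
    (frobenius_norm_submatrix_le E ι.injective κ.injective)
    (frobenius_norm_submatrix_le E ι.injective Function.injective_id)
    (frobenius_norm_submatrix_le E Function.injective_id κ.injective)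
  rw [← hA, ← hC, ← hR] at key
  simp only [frobNorm_eq_norm]
  exact key

/-- Corollary 4.4: unthresholded CUR perturbation bound. -/
theorem cur_perturbation {𝕂 : Type} [RCLike 𝕂] {m n k p q : ℕ}
    (A E : Matrix (Fin m) (Fin n) 𝕂)
    (hrankA : A.rank = k)
    (ι : Fin p ↪ Fin m) (κ : Fin q ↪ Fin n)
    (hrankC : (A.submatrix id ⇑κ).rank = k)
    (hrankU : (A.submatrix ⇑ι ⇑κ).rank = k)
    (hrankR : (A.submatrix ⇑ι id).rank = k)
    (W : Matrix (Fin m) (Fin k) 𝕂) (V : Matrix (Fin n) (Fin k) 𝕂) (d : Fin k → ℝ)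
    (hW : Wᴴ * W = 1) (hV : Vᴴ * V = 1)
    (hmono : ∀ i j : Fin k, i ≤ j → d j ≤ d i) (hpos : ∀ i, 0 < d i)
    (hSVD : A = W * Matrix.diagonal (fun i => (d i : 𝕂)) * Vᴴ)
    (Wp : Matrix (Fin k) (Fin p) 𝕂) (hWp : IsMPInv (W.submatrix ⇑ι id) Wp)
    (Vp : Matrix (Fin k) (Fin q) 𝕂) (hVp : IsMPInv (V.submatrix ⇑κ id) Vp)
    (Utp : Matrix (Fin q) (Fin p) 𝕂) (hUtp : IsMPInv ((A + E).submatrix ⇑ι ⇑κ) Utp) :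
    frobNorm (A - (A + E).submatrix id ⇑κ * Utp * (A + E).submatrix ⇑ι id) ≤
      (frobNorm Wp + frobNorm Vp + 3 * (frobNorm Wp * frobNorm Vp)) * frobNorm E +
        frobNorm Utp * (frobNorm Wp + frobNorm Vp + frobNorm Wp * frobNorm Vp + 1) *
          frobNorm E ^ 2 :=
  cur_perturbation_general A E ι κ hrankU W V d hW hV hSVD Wp hWp Vp hVp Utp hUtp
end

section
/- One-sided projection perturbation bounds (Lemma 8.1): Under the stated assumptions, ‖A − C̃ C̃† Ã‖_F ≤ ‖E_J‖_F · ‖C† A‖_F + ‖E‖_F, and ‖A − Ã R̃† R̃‖_F ≤ ‖E_I‖_F · ‖A R†‖_F + ‖E‖_F. -/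
open Matrix

/-!
Let `P = C̃ C̃†`, the orthogonal projector onto the column space of `C̃ = C + E_J`. Since `C`
consists of columns of `A` and has the same rank, its columns span the column space of `A`, so
`A = C G` with `G = C† A`. As `1 - P` kills `C + E_J`, we get `(1 - P) C = -(1 - P) E_J`, hence
`A - P Ã = -(1 - P) E_J G - P E`; both `P` and `1 - P` are contractions for the Frobenius norm.
The row bound is the column bound for conjugate transposes.
-/

open Matrix

section ColumnSpace

variable {K : Type*} [Field K] {m n p q : Type*} [Fintype n] [Fintype p] [Fintype q]

theorem Matrix.range_mulVecLin_submatrix_eq_of_rank_eq (A : Matrix m n K) (κ : q → n)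
    (h : (A.submatrix id κ).rank = A.rank) :
    LinearMap.range (A.submatrix id κ).mulVecLin = LinearMap.range A.mulVecLin := by
  refine Submodule.eq_of_le_of_finrank_eq ?_ h
  rw [range_mulVecLin, range_mulVecLin]
  exact Submodule.span_mono (Set.range_comp_subset_range κ A.col)

theorem Matrix.mul_mul_eq_self_of_range_le [Fintype m] {C : Matrix m q K} {Cp : Matrix q m K}
    {A : Matrix m n K} (hC : C * Cp * C = C)
    (hr : LinearMap.range A.mulVecLin ≤ LinearMap.range C.mulVecLin) : C * Cp * A = A := by
  refine ext_iff_mulVec.2 fun v => ?_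
  obtain ⟨y, hy⟩ := hr ⟨v, rfl⟩
  change C *ᵥ y = A *ᵥ v at hy
  rw [← mulVec_mulVec, ← hy, mulVec_mulVec, hC]

theorem Matrix.submatrix_mul_mul_eq_self_of_rank_eq [Fintype m] (A : Matrix m n K) (κ : q → n)
    (h : (A.submatrix id κ).rank = A.rank) {Cp : Matrix q m K}
    (hCp : A.submatrix id κ * Cp * A.submatrix id κ = A.submatrix id κ) :
    A.submatrix id κ * Cp * A = A :=
  mul_mul_eq_self_of_range_le hCp (range_mulVecLin_submatrix_eq_of_rank_eq A κ h).ge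

theorem Matrix.mul_mul_submatrix_eq_self_of_rank_eq [Fintype m] (A : Matrix m n K) (ι : p → m)
    (h : (A.submatrix ι id).rank = A.rank) {Rp : Matrix n p K}
    (hRp : A.submatrix ι id * Rp * A.submatrix ι id = A.submatrix ι id) :
    A * Rp * A.submatrix ι id = A := by
  have hRpT : Aᵀ.submatrix id ι * Rpᵀ * Aᵀ.submatrix id ι = Aᵀ.submatrix id ι := by
    simpa only [transpose_mul, Matrix.mul_assoc, transpose_submatrix] using congrArg transpose hRp
  have hrank : (Aᵀ.submatrix id ι).rank = Aᵀ.rank := by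
    rwa [← transpose_submatrix, rank_transpose, rank_transpose]
  have := Aᵀ.submatrix_mul_mul_eq_self_of_rank_eq ι hrank hRpT
  simpa only [← transpose_submatrix, ← transpose_mul, Matrix.mul_assoc, transpose_inj]
    using this

end ColumnSpace

section FrobeniusNorm

attribute [local instance] Matrix.frobeniusNormedAddCommGroup

variable {𝕂 : Type*} [RCLike 𝕂] {m n q : Type*} [Fintype m] [Fintype n] [Fintype q]

theorem Matrix.frobenius_norm_sq_eq_re_trace_s13 (M : Matrix m n 𝕂) :
    ‖M‖ ^ 2 = RCLike.re (Mᴴ * M).trace := by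
  rw [frobenius_norm_def, ← Real.rpow_natCast, ← Real.rpow_mul (by positivity), Finset.sum_comm]
  simp [trace, mul_apply, RCLike.conj_mul]

theorem IsStarProjection.frobenius_norm_sq_mul_add_sq_one_sub_mul [DecidableEq m]
    {P : Matrix m m 𝕂} (hP : IsStarProjection P) (X : Matrix m n 𝕂) :
    ‖P * X‖ ^ 2 + ‖(1 - P) * X‖ ^ 2 = ‖X‖ ^ 2 := by
  have gram {Q : Matrix m m 𝕂} (hQ : IsStarProjection Q) :
      (Q * X)ᴴ * (Q * X) = Xᴴ * (Q * X) := by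
    rw [conjTranspose_mul, Matrix.mul_assoc, ← Matrix.mul_assoc Qᴴ, ← star_eq_conjTranspose,
      hQ.isSelfAdjoint.star_eq, hQ.isIdempotentElem.eq]
  simp only [frobenius_norm_sq_eq_re_trace_s13, gram hP, gram hP.one_sub, ← map_add, ← trace_add,
    ← Matrix.mul_add, ← Matrix.add_mul, add_sub_cancel, Matrix.one_mul]

theorem IsStarProjection.frobenius_norm_mul_le [DecidableEq m] {P : Matrix m m 𝕂}
    (hP : IsStarProjection P) (X : Matrix m n 𝕂) : ‖P * X‖ ≤ ‖X‖ := by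
  have := hP.frobenius_norm_sq_mul_add_sq_one_sub_mul X
  nlinarith [norm_nonneg (P * X), norm_nonneg X, sq_nonneg ‖(1 - P) * X‖]

theorem IsStarProjection.frobenius_norm_sub_mul_add_le [DecidableEq m] {P : Matrix m m 𝕂}
    (hP : IsStarProjection P) {A E : Matrix m n 𝕂} {C EJ : Matrix m q 𝕂} {G : Matrix q n 𝕂}
    (hA : C * G = A) (hPC : P * (C + EJ) = C + EJ) :
    ‖A - P * (A + E)‖ ≤ ‖EJ‖ * ‖G‖ + ‖E‖ := by
  have hC : (1 - P) * C = -((1 - P) * EJ) := by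
    refine eq_neg_of_add_eq_zero_left ?_
    rw [← Matrix.mul_add, Matrix.sub_mul, hPC, Matrix.one_mul, sub_self]
  have hsplit : A - P * (A + E) = -((1 - P) * EJ * G) - P * E := by
    rw [← Matrix.neg_mul, ← hC, ← hA]
    simp only [Matrix.mul_add, Matrix.sub_mul, Matrix.one_mul, Matrix.mul_assoc]
    abel
  calc ‖A - P * (A + E)‖ ≤ ‖(1 - P) * EJ * G‖ + ‖P * E‖ := by
        rw [hsplit, ← norm_neg ((1 - P) * EJ * G)]
        exact norm_sub_le _ _
    _ ≤ ‖(1 - P) * EJ‖ * ‖G‖ + ‖P * E‖ := by gcongr; exact frobenius_norm_mul _ _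
    _ ≤ ‖EJ‖ * ‖G‖ + ‖E‖ := by
        gcongr
        exacts [hP.one_sub.frobenius_norm_mul_le EJ, hP.frobenius_norm_mul_le E]

theorem IsStarProjection.frobenius_norm_sub_add_mul_le [DecidableEq n] {P : Matrix n n 𝕂}
    (hP : IsStarProjection P) {A E : Matrix m n 𝕂} {R EI : Matrix q n 𝕂} {G : Matrix m q 𝕂}
    (hA : G * R = A) (hRP : (R + EI) * P = R + EI) :
    ‖A - (A + E) * P‖ ≤ ‖EI‖ * ‖G‖ + ‖E‖ := by
  have hPH : Pᴴ = P := hP.isSelfAdjoint.star_eq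
  have := hP.frobenius_norm_sub_mul_add_le (A := Aᴴ) (E := Eᴴ) (C := Rᴴ) (EJ := EIᴴ)
    (G := Gᴴ) (by rw [← conjTranspose_mul, hA])
    (by rw [← hPH, ← conjTranspose_add, ← conjTranspose_mul, hRP])
  rwa [← hPH, ← conjTranspose_add, ← conjTranspose_mul, ← conjTranspose_sub,
    frobenius_norm_conjTranspose, frobenius_norm_conjTranspose, frobenius_norm_conjTranspose,
    frobenius_norm_conjTranspose] at this

end FrobeniusNorm

section FinMatrix

attribute [local instance] Matrix.frobeniusNormedAddCommGroup

variable {𝕂 : Type} [RCLike 𝕂] {m n : ℕ}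

theorem frobNorm_eq_norm_s13 (M : Matrix (Fin m) (Fin n) 𝕂) : frobNorm M = ‖M‖ := by
  rw [frobNorm, frobenius_norm_def, Real.sqrt_eq_rpow]
  norm_cast

theorem IsMPInv.isStarProjection_mul_pinv_s13 {M : Matrix (Fin m) (Fin n) 𝕂}
    {P : Matrix (Fin n) (Fin m) 𝕂} (h : IsMPInv M P) : IsStarProjection (M * P) :=
  ⟨by rw [IsIdempotentElem, ← Matrix.mul_assoc, h.1], h.2.2.1⟩

theorem IsMPInv.isStarProjection_pinv_mul_s13 {M : Matrix (Fin m) (Fin n) 𝕂}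
    {P : Matrix (Fin n) (Fin m) 𝕂} (h : IsMPInv M P) : IsStarProjection (P * M) :=
  ⟨by rw [IsIdempotentElem, ← Matrix.mul_assoc, h.2.1], h.2.2.2⟩

end FinMatrix

theorem one_sided_projection_perturbation_general {𝕂 : Type} [RCLike 𝕂] {m n k p q : ℕ}
    (A E : Matrix (Fin m) (Fin n) 𝕂)
    (hrankA : A.rank = k)
    (ι : Fin p ↪ Fin m) (κ : Fin q ↪ Fin n)
    (hrankC : (A.submatrix id ⇑κ).rank = k)
    (hrankR : (A.submatrix ⇑ι id).rank = k)
    (Cp : Matrix (Fin q) (Fin m) 𝕂) (hCp : IsMPInv (A.submatrix id ⇑κ) Cp)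
    (Rp : Matrix (Fin n) (Fin p) 𝕂) (hRp : IsMPInv (A.submatrix ⇑ι id) Rp)
    (Ctp : Matrix (Fin q) (Fin m) 𝕂) (hCtp : IsMPInv ((A + E).submatrix id ⇑κ) Ctp)
    (Rtp : Matrix (Fin n) (Fin p) 𝕂) (hRtp : IsMPInv ((A + E).submatrix ⇑ι id) Rtp) :
    frobNorm (A - (A + E).submatrix id ⇑κ * Ctp * (A + E)) ≤
        frobNorm (E.submatrix id ⇑κ) * frobNorm (Cp * A) + frobNorm E ∧
    frobNorm (A - (A + E) * Rtp * (A + E).submatrix ⇑ι id) ≤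
        frobNorm (E.submatrix ⇑ι id) * frobNorm (A * Rp) + frobNorm E := by
  simp only [frobNorm_eq_norm_s13]
  constructor
  · have hA : A.submatrix id κ * (Cp * A) = A := by
      rw [← Matrix.mul_assoc]
      exact A.submatrix_mul_mul_eq_self_of_rank_eq κ (hrankC.trans hrankA.symm) hCp.1
    exact hCtp.isStarProjection_mul_pinv_s13.frobenius_norm_sub_mul_add_le hA hCtp.1
  · have hA : A * Rp * A.submatrix ι id = A :=
      A.mul_mul_submatrix_eq_self_of_rank_eq ι (hrankR.trans hrankA.symm) hRp.1
    rw [Matrix.mul_assoc]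
    exact hRtp.isStarProjection_pinv_mul_s13.frobenius_norm_sub_add_mul_le hA
      (by rw [← Matrix.mul_assoc]; exact hRtp.1)

/-- Lemma 8.1: one-sided projection perturbation bounds. -/
theorem one_sided_projection_perturbation {𝕂 : Type} [RCLike 𝕂] {m n k p q : ℕ}
    (A E : Matrix (Fin m) (Fin n) 𝕂)
    (hrankA : A.rank = k)
    (ι : Fin p ↪ Fin m) (κ : Fin q ↪ Fin n)
    (hrankC : (A.submatrix id ⇑κ).rank = k)
    (hrankU : (A.submatrix ⇑ι ⇑κ).rank = k)
    (hrankR : (A.submatrix ⇑ι id).rank = k)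
    (Cp : Matrix (Fin q) (Fin m) 𝕂) (hCp : IsMPInv (A.submatrix id ⇑κ) Cp)
    (Rp : Matrix (Fin n) (Fin p) 𝕂) (hRp : IsMPInv (A.submatrix ⇑ι id) Rp)
    (Ctp : Matrix (Fin q) (Fin m) 𝕂) (hCtp : IsMPInv ((A + E).submatrix id ⇑κ) Ctp)
    (Rtp : Matrix (Fin n) (Fin p) 𝕂) (hRtp : IsMPInv ((A + E).submatrix ⇑ι id) Rtp) :
    frobNorm (A - (A + E).submatrix id ⇑κ * Ctp * (A + E)) ≤
        frobNorm (E.submatrix id ⇑κ) * frobNorm (Cp * A) + frobNorm E ∧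
    frobNorm (A - (A + E) * Rtp * (A + E).submatrix ⇑ι id) ≤
        frobNorm (E.submatrix ⇑ι id) * frobNorm (A * Rp) + frobNorm E :=
  one_sided_projection_perturbation_general A E hrankA ι κ hrankC hrankR Cp hCp Rp hRp Ctp hCtp Rtp
    hRtp
end
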